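/- arXiv:2303.12133 — 2 statements merged into one kernel-verified Lean document; each statement's English description precedes it below -/
import Mathlib

section
/- Minorization property: with g(λ) = b·λ − β⁻¹ Tr[exp(−β(C − diag(λ)))] and g⁰(λ) = b·λ − β⁻¹ Tr[exp(β diag(λ − λ⁰)) exp(−β(C − diag(λ⁰)))], one has g⁰(λ) ≤ g(λ) for all λ ∈ ℝⁿ, with equality at λ = λ⁰. -/
/-!
With `A = β • diag(λ - λ⁰)` and `B = -β • (C - diag λ⁰)`, both symmetric, one has
`A + B = -β • (C - diag λ)`, so `g⁰ ≤ g` is the Golden–Thompson inequality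
`Tr exp(A + B) ≤ Tr(exp A * exp B)`, and equality at `λ⁰` is `exp 0 = 1`.
Golden–Thompson follows from the Lie product formula `(exp(A/m) exp(B/m))^m → exp(A + B)`
along `m = 2^k` and the trace inequality `Tr (XY)^(2^k) ≤ Tr (X^(2^k) Y^(2^k))` for symmetric
`X, Y`, which is proved by induction on `k` from the Cauchy–Schwarz inequality for the trace
form `(M, N) ↦ Tr (M Nᵀ)`.
-/

open Matrix Filter Topology

namespace Matrix

variable {ι R : Type*} [Fintype ι]

theorem trace_mul_transpose_eq_sum [NonUnitalNonAssocSemiring R] (M N : Matrix ι ι R) :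
    (M * Nᵀ).trace = ∑ p : ι × ι, M p.1 p.2 * N p.1 p.2 := by
  simp [trace, mul_apply, ← Finset.sum_product']

theorem trace_pow_mul_comm [DecidableEq ι] [CommSemiring R] (A B : Matrix ι ι R) (m : ℕ) :
    ((A * B) ^ m).trace = ((B * A) ^ m).trace := by
  cases m with
  | zero => simp
  | succ m => rw [pow_succ, ← mul_assoc, mul_pow_mul, mul_assoc, trace_mul_comm, mul_assoc,
      ← pow_succ]

section Ordered

variable [CommRing R] [LinearOrder R] [IsStrictOrderedRing R]

theorem trace_mul_transpose_self_nonneg (M : Matrix ι ι R) : 0 ≤ (M * Mᵀ).trace := by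
  rw [trace_mul_transpose_eq_sum]
  exact Finset.sum_nonneg fun _ _ => mul_self_nonneg _

theorem trace_mul_transpose_sq_le (M N : Matrix ι ι R) :
    (M * Nᵀ).trace ^ 2 ≤ (M * Mᵀ).trace * (N * Nᵀ).trace := by
  simp only [trace_mul_transpose_eq_sum, ← sq]
  exact Finset.sum_mul_sq_le_sq_mul_sq _ _ _

theorem trace_mul_self_le_trace_mul_transpose_self (M : Matrix ι ι R) :
    (M * M).trace ≤ (M * Mᵀ).trace := by
  have h := trace_mul_transpose_sq_le M Mᵀ
  rw [transpose_transpose, trace_mul_comm Mᵀ, ← sq (M * Mᵀ).trace] at h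
  exact (abs_le_of_sq_le_sq' h (trace_mul_transpose_self_nonneg M)).2

theorem IsSymm.trace_mul_le_of_trace_mul_self_eq {U V : Matrix ι ι R} (hU : U.IsSymm)
    (hV : V.IsSymm) (h : (V * V).trace = (U * U).trace) : (U * V).trace ≤ (U * U).trace := by
  have hCS := trace_mul_transpose_sq_le U V
  have hnonneg := trace_mul_transpose_self_nonneg U
  rw [hU.eq, hV.eq, h, ← sq (U * U).trace] at hCS
  rw [hU.eq] at hnonneg
  exact (abs_le_of_sq_le_sq' hCS hnonneg).2

variable [DecidableEq ι]

theorem IsSymm.trace_mul_sq_le {X Y : Matrix ι ι R} (hX : X.IsSymm) (hY : Y.IsSymm) :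
    ((X * Y) ^ 2).trace ≤ (X ^ 2 * Y ^ 2).trace := by
  calc ((X * Y) ^ 2).trace ≤ (X * Y * (X * Y)ᵀ).trace := by
        rw [sq]; exact trace_mul_self_le_trace_mul_transpose_self _
    _ = (X ^ 2 * Y ^ 2).trace := by
        rw [transpose_mul, hX.eq, hY.eq, ← mul_assoc, trace_mul_comm, sq, sq]; noncomm_ring

theorem IsSymm.trace_mul_pow_two_pow_add_two_le {k : ℕ}
    (hA : ∀ X Y : Matrix ι ι R, X.IsSymm → Y.IsSymm →
      ((X * Y) ^ 2 ^ (k + 1)).trace ≤ ((X ^ 2 * Y ^ 2) ^ 2 ^ k).trace)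
    (hB : ∀ X Y : Matrix ι ι R, X.IsSymm → Y.IsSymm →
      ((X * Y) ^ 2 ^ k).trace ≤ (X ^ 2 ^ k * Y ^ 2 ^ k).trace)
    {X Y : Matrix ι ι R} (hX : X.IsSymm) (hY : Y.IsSymm) :
    ((X * Y) ^ 2 ^ (k + 2)).trace ≤ ((X ^ 2 * Y ^ 2) ^ 2 ^ (k + 1)).trace := by
  have hXYX : (X * Y * X).IsSymm := by
    simp [IsSymm, transpose_mul, hX.eq, hY.eq, mul_assoc]
  have hXYXY : (X * Y * X) ^ 2 * Y ^ 2 = X * (Y * X * X * Y * X * Y * Y) := by noncomm_ring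
  have hYXXYXYYX : Y * X * X * Y * X * Y * Y * X = Y * X * (X * Y) * (X * Y * (Y * X)) := by
    noncomm_ring
  have hYXXY : Y * X * (X * Y) = Y * (X * X * Y) := by noncomm_ring
  have hXXYY : X * X * Y * Y = X ^ 2 * Y ^ 2 := by noncomm_ring
  set S := Y * X * (X * Y)
  set T := X * Y * (Y * X)
  have hS : S.IsSymm := by simpa [hX.eq, hY.eq] using isSymm_mul_transpose_self (Y * X)
  have hT : T.IsSymm := by simpa [hX.eq, hY.eq] using isSymm_mul_transpose_self (X * Y)
  set m := 2 ^ k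
  have hm : 2 ^ (k + 1) = m + m := by rw [pow_succ]; ring
  calc ((X * Y) ^ 2 ^ (k + 2)).trace = ((X * Y * X * Y) ^ 2 ^ (k + 1)).trace := by
        rw [pow_succ' 2 (k + 1), pow_mul, sq, ← mul_assoc]
    _ ≤ (((X * Y * X) ^ 2 * Y ^ 2) ^ m).trace := hA _ _ hXYX hY
    _ = ((S * T) ^ m).trace := by rw [hXYXY, trace_pow_mul_comm, hYXXYXYYX]
    _ ≤ (S ^ m * T ^ m).trace := hB S T hS hT
    _ ≤ (S ^ m * S ^ m).trace := by
        refine (hS.pow m).trace_mul_le_of_trace_mul_self_eq (hT.pow m) ?_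
        rw [← pow_add, ← pow_add, trace_pow_mul_comm]
    _ = ((X ^ 2 * Y ^ 2) ^ 2 ^ (k + 1)).trace := by
        rw [← pow_add, ← hm, hYXXY, trace_pow_mul_comm, hXXYY]

-- The halving step at `k + 1` needs the full chain at `k`, so both are proved together.
theorem trace_mul_pow_two_pow_succ_le_and_trace_mul_pow_two_pow_le (k : ℕ) :
    (∀ X Y : Matrix ι ι R, X.IsSymm → Y.IsSymm →
      ((X * Y) ^ 2 ^ (k + 1)).trace ≤ ((X ^ 2 * Y ^ 2) ^ 2 ^ k).trace) ∧
    (∀ X Y : Matrix ι ι R, X.IsSymm → Y.IsSymm →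
      ((X * Y) ^ 2 ^ k).trace ≤ (X ^ 2 ^ k * Y ^ 2 ^ k).trace) := by
  induction k with
  | zero => exact ⟨fun X Y hX hY => by simpa using hX.trace_mul_sq_le hY, by simp⟩
  | succ k ih =>
    obtain ⟨hA, hB⟩ := ih
    refine ⟨fun X Y hX hY => hX.trace_mul_pow_two_pow_add_two_le hA hB hY,
      fun X Y hX hY => ?_⟩
    calc ((X * Y) ^ 2 ^ (k + 1)).trace ≤ ((X ^ 2 * Y ^ 2) ^ 2 ^ k).trace := hA X Y hX hY
      _ ≤ ((X ^ 2) ^ 2 ^ k * (Y ^ 2) ^ 2 ^ k).trace := hB _ _ (hX.pow 2) (hY.pow 2)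
      _ = (X ^ 2 ^ (k + 1) * Y ^ 2 ^ (k + 1)).trace := by
          rw [← pow_mul, ← pow_mul, ← pow_succ']

theorem IsSymm.trace_mul_pow_two_pow_le {X Y : Matrix ι ι R} (hX : X.IsSymm) (hY : Y.IsSymm)
    (k : ℕ) : ((X * Y) ^ 2 ^ k).trace ≤ (X ^ 2 ^ k * Y ^ 2 ^ k).trace :=
  (trace_mul_pow_two_pow_succ_le_and_trace_mul_pow_two_pow_le k).2 X Y hX hY

end Ordered

end Matrix

theorem norm_pow_sub_pow_le {𝔸 : Type*} [NormedRing 𝔸] [NormOneClass 𝔸] {x y : 𝔸} {C : ℝ}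
    (hx : ‖x‖ ≤ C) (hy : ‖y‖ ≤ C) (m : ℕ) : ‖x ^ m - y ^ m‖ ≤ m * C ^ (m - 1) * ‖x - y‖ := by
  induction m with
  | zero => simp
  | succ m ih =>
    have hC0 : 0 ≤ C := (norm_nonneg x).trans hx
    have hxm : ‖x ^ m‖ ≤ C ^ m := (norm_pow_le x m).trans (by gcongr)
    have htel : x ^ (m + 1) - y ^ (m + 1) = x ^ m * (x - y) + (x ^ m - y ^ m) * y := by
      noncomm_ring
    have hC : (m : ℝ) * C ^ (m - 1) * C = m * C ^ m := by
      rcases m with _ | m <;> simp [pow_succ, mul_assoc]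
    have hih_nonneg : 0 ≤ m * C ^ (m - 1) * ‖x - y‖ :=
      mul_nonneg (mul_nonneg m.cast_nonneg (pow_nonneg hC0 (m - 1))) (norm_nonneg (x - y))
    calc ‖x ^ (m + 1) - y ^ (m + 1)‖ ≤ ‖x ^ m‖ * ‖x - y‖ + ‖x ^ m - y ^ m‖ * ‖y‖ := by
          rw [htel]; exact (norm_add_le _ _).trans (add_le_add (norm_mul_le _ _) (norm_mul_le _ _))
      _ ≤ C ^ m * ‖x - y‖ + m * C ^ (m - 1) * ‖x - y‖ * C := by gcongr
      _ = (m + 1 : ℕ) * C ^ (m + 1 - 1) * ‖x - y‖ := by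
          rw [Nat.add_sub_cancel]; push_cast; linear_combination ‖x - y‖ * hC

namespace NormedSpace

variable {𝔸 : Type*} [NormedRing 𝔸] [NormedAlgebra ℝ 𝔸]

section NormOneClass

variable [NormOneClass 𝔸]

theorem norm_exp_le (x : 𝔸) : ‖exp x‖ ≤ Real.exp ‖x‖ := by
  rw [exp_eq_tsum ℝ, Real.exp_eq_exp_ℝ, exp_eq_tsum ℝ]
  refine (norm_tsum_le_tsum_norm (norm_expSeries_summable' x)).trans ?_
  refine (norm_expSeries_summable' x).tsum_le_tsum (fun n => ?_) (expSeries_summable' ‖x‖)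
  rw [norm_smul, norm_inv, Real.norm_natCast, smul_eq_mul]
  gcongr
  exact norm_pow_le x n

theorem norm_exp_smul_mul_exp_smul_le {t : ℝ} (ht : 0 ≤ t) (a b : 𝔸) :
    ‖exp (t • a) * exp (t • b)‖ ≤ Real.exp (t * (‖a‖ + ‖b‖)) := by
  calc ‖exp (t • a) * exp (t • b)‖ ≤ Real.exp ‖t • a‖ * Real.exp ‖t • b‖ :=
        (norm_mul_le _ _).trans (mul_le_mul (norm_exp_le _) (norm_exp_le _) (norm_nonneg _)
          (Real.exp_pos _).le)
    _ = Real.exp (t * (‖a‖ + ‖b‖)) := by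
        rw [← Real.exp_add, norm_smul, norm_smul, Real.norm_of_nonneg ht, mul_add]

theorem norm_exp_smul_add_le {t : ℝ} (ht : 0 ≤ t) (a b : 𝔸) :
    ‖exp (t • (a + b))‖ ≤ Real.exp (t * (‖a‖ + ‖b‖)) := by
  refine (norm_exp_le _).trans (Real.exp_le_exp.2 ?_)
  rw [norm_smul, Real.norm_of_nonneg ht]
  gcongr
  exact norm_add_le a b

end NormOneClass

variable [CompleteSpace 𝔸]

theorem exp_inv_natCast_smul_pow {m : ℕ} (hm : m ≠ 0) (x : 𝔸) :
    exp ((m : ℝ)⁻¹ • x) ^ m = exp x := by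
  let _ : NormedAlgebra ℚ 𝔸 := .restrictScalars ℚ ℝ 𝔸
  rw [← exp_nsmul, ← Nat.cast_smul_eq_nsmul ℝ, smul_smul, mul_inv_cancel₀ (Nat.cast_ne_zero.2 hm),
    one_smul]

theorem tendsto_smul_exp_smul_mul_exp_smul_sub_exp_smul (a b : 𝔸) :
    Tendsto (fun m : ℕ => (m : ℝ) • (exp ((m : ℝ)⁻¹ • a) * exp ((m : ℝ)⁻¹ • b) -
      exp ((m : ℝ)⁻¹ • (a + b)))) atTop (𝓝 0) := by
  have hderiv : HasDerivAt (fun t : ℝ => exp (t • a) * exp (t • b) - exp (t • (a + b))) 0 0 := by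
    refine (((hasDerivAt_exp_smul_const a (0 : ℝ)).fun_mul
      (hasDerivAt_exp_smul_const b (0 : ℝ))).fun_sub
      (hasDerivAt_exp_smul_const (a + b) (0 : ℝ))).congr_deriv ?_
    simp
  have hinv : Tendsto (fun m : ℕ => (m : ℝ)⁻¹) atTop (𝓝[>] 0) :=
    tendsto_inv_atTop_nhdsGT_zero.comp tendsto_natCast_atTop_atTop
  simpa [Function.comp_def] using hderiv.tendsto_slope_zero_right.comp hinv

theorem tendsto_exp_smul_mul_exp_smul_pow [NormOneClass 𝔸] (a b : 𝔸) :
    Tendsto (fun m : ℕ => (exp ((m : ℝ)⁻¹ • a) * exp ((m : ℝ)⁻¹ • b)) ^ m) atTop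
      (𝓝 (exp (a + b))) := by
  set D : ℕ → 𝔸 := fun m => exp ((m : ℝ)⁻¹ • a) * exp ((m : ℝ)⁻¹ • b) -
    exp ((m : ℝ)⁻¹ • (a + b))
  have hlim : Tendsto (fun m : ℕ => Real.exp (‖a‖ + ‖b‖) * (m * ‖D m‖)) atTop (𝓝 0) := by
    simpa [D, norm_smul] using
      ((tendsto_smul_exp_smul_mul_exp_smul_sub_exp_smul a b).norm.const_mul
        (Real.exp (‖a‖ + ‖b‖)))
  rw [tendsto_iff_norm_sub_tendsto_zero]
  refine squeeze_zero' (Eventually.of_forall fun _ => norm_nonneg _) ?_ hlim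
  filter_upwards [eventually_ne_atTop 0] with m hm
  have hm' : (m : ℝ) ≠ 0 := Nat.cast_ne_zero.2 hm
  have ht : (0 : ℝ) ≤ (m : ℝ)⁻¹ := inv_nonneg.2 m.cast_nonneg
  set C := Real.exp ((m : ℝ)⁻¹ * (‖a‖ + ‖b‖))
  have hCm : C ^ (m - 1) ≤ Real.exp (‖a‖ + ‖b‖) := by
    calc C ^ (m - 1) ≤ C ^ m := pow_le_pow_right₀ (Real.one_le_exp (by positivity)) (m.sub_le 1)
      _ = Real.exp (‖a‖ + ‖b‖) := by
          rw [← Real.exp_nat_mul, ← mul_assoc, mul_inv_cancel₀ hm', one_mul]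
  calc ‖(exp ((m : ℝ)⁻¹ • a) * exp ((m : ℝ)⁻¹ • b)) ^ m - exp (a + b)‖
      ≤ m * C ^ (m - 1) * ‖D m‖ := by
        rw [← exp_inv_natCast_smul_pow hm (a + b)]
        exact norm_pow_sub_pow_le (norm_exp_smul_mul_exp_smul_le ht a b)
          (norm_exp_smul_add_le ht a b) m
    _ = C ^ (m - 1) * (m * ‖D m‖) := by ring
    _ ≤ Real.exp (‖a‖ + ‖b‖) * (m * ‖D m‖) := by gcongr

end NormedSpace

namespace Matrix

open NormedSpace

variable {ι : Type*} [Fintype ι] [DecidableEq ι]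

open scoped Norms.Operator in
theorem IsSymm.trace_exp_add_le {A B : Matrix ι ι ℝ} (hA : A.IsSymm) (hB : B.IsSymm) :
    (NormedSpace.exp (A + B)).trace ≤ (NormedSpace.exp A * NormedSpace.exp B).trace := by
  rcases isEmpty_or_nonempty ι with hι | hι
  · simp [trace]
  have hpow : Tendsto (fun k : ℕ => 2 ^ k) atTop atTop :=
    tendsto_pow_atTop_atTop_of_one_lt one_lt_two
  have hlim := (continuous_id.matrix_trace.tendsto _).comp
    ((tendsto_exp_smul_mul_exp_smul_pow A B).comp hpow)
  refine le_of_tendsto' hlim fun k => ?_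
  have h2k : 2 ^ k ≠ 0 := pow_ne_zero k two_ne_zero
  have hApow : NormedSpace.exp (((2 ^ k : ℕ) : ℝ)⁻¹ • A) ^ 2 ^ k = NormedSpace.exp A :=
    exp_inv_natCast_smul_pow h2k A
  have hBpow : NormedSpace.exp (((2 ^ k : ℕ) : ℝ)⁻¹ • B) ^ 2 ^ k = NormedSpace.exp B :=
    exp_inv_natCast_smul_pow h2k B
  have := ((hA.smul ((2 ^ k : ℕ) : ℝ)⁻¹).exp).trace_mul_pow_two_pow_le
    ((hB.smul ((2 ^ k : ℕ) : ℝ)⁻¹).exp) k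
  rwa [hApow, hBpow] at this

end Matrix

/-- Minorization: with `g(λ) = b·λ − β⁻¹ Tr[exp(−β(C − diag(λ)))]` and
`g⁰(λ) = b·λ − β⁻¹ Tr[exp(β diag(λ − λ⁰)) exp(−β(C − diag(λ⁰)))]`, one has
`g⁰ ≤ g` pointwise, with equality at `λ = λ⁰`. -/
theorem minorization {n : ℕ} (C : Matrix (Fin n) (Fin n) ℝ) (hC : C.IsHermitian)
    (b : Fin n → ℝ) (β : ℝ) (hβ : 0 < β) (lam0 : Fin n → ℝ)
    (g g0 : (Fin n → ℝ) → ℝ)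
    (hg : ∀ l, g l = b ⬝ᵥ l - β⁻¹ * (NormedSpace.exp ((-β) • (C - Matrix.diagonal l))).trace)
    (hg0 : ∀ l, g0 l = b ⬝ᵥ l - β⁻¹ *
      (NormedSpace.exp (β • Matrix.diagonal (l - lam0)) *
        NormedSpace.exp ((-β) • (C - Matrix.diagonal lam0))).trace) :
    (∀ l, g0 l ≤ g l) ∧ g0 lam0 = g lam0 := by
  have hCsymm : C.IsSymm := by
    rwa [IsHermitian, conjTranspose_eq_transpose_of_trivial] at hC
  refine ⟨fun l => ?_, ?_⟩
  · have hsum :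
        β • diagonal (l - lam0) + (-β) • (C - diagonal lam0) = (-β) • (C - diagonal l) := by
      rw [show diagonal (l - lam0) = diagonal l - diagonal lam0 from (diagonal_sub l lam0).symm]
      module
    have hGT := ((isSymm_diagonal (l - lam0)).smul β).trace_exp_add_le
      ((hCsymm.sub (isSymm_diagonal lam0)).smul (-β))
    rw [hsum] at hGT
    rw [hg, hg0]
    exact sub_le_sub_left (mul_le_mul_of_nonneg_left hGT (inv_nonneg.2 hβ.le)) _
  · rw [hg, hg0, sub_self, diagonal_zero', smul_zero, NormedSpace.exp_zero, one_mul]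
end

section
/- Weak duality for entropically regularized SDP: for any λ ∈ ℝ^m and any symmetric positive definite X satisfying Tr[AᵢX] = bᵢ for all i, it holds that b·λ − β⁻¹ Tr[exp(−β(C − λ·A))] ≤ Tr[CX] + β⁻¹ Tr[X log X − X]. -/
/-!
Weak duality is the Gibbs variational inequality `Tr[H X] ≤ Tr[X log X - X] + Tr[exp H]` for
`H = -β (C - λ·A)`, since `Tr[(λ·A) X] = b·λ` on the feasible set. Writing `H = V diag(d) Vᵀ` and
`X = U diag(x) Uᵀ`, one gets `Tr[H X] = ∑ᵢⱼ dᵢ xⱼ Wᵢⱼ²` with `W = Vᵀ U` orthogonal; as `(Wᵢⱼ²)` is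
doubly stochastic, the inequality follows termwise from `h x ≤ x log x - x + exp h` for `x > 0`.
-/

open Matrix

/-- Matrix logarithm of a Hermitian matrix, via the continuous functional calculus
(junk value `0` on non-Hermitian matrices). -/
noncomputable def matLog {n : ℕ} (A : Matrix (Fin n) (Fin n) ℝ) : Matrix (Fin n) (Fin n) ℝ :=
  if h : A.IsHermitian then h.cfc Real.log else 0

theorem Real.mul_le_mul_log_sub_add_exp (h : ℝ) {x : ℝ} (hx : 0 < x) :
    h * x ≤ x * Real.log x - x + Real.exp h := by
  -- tangent line `1 + t ≤ exp t` at `t = h - log x`, scaled by `x`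
  have hexp : x * Real.exp (h - Real.log x) = Real.exp h := by
    rw [Real.exp_sub, Real.exp_log hx, mul_div_cancel₀ _ hx.ne']
  nlinarith [Real.add_one_le_exp (h - Real.log x)]

namespace Matrix

variable {ι : Type*} [Fintype ι] [DecidableEq ι]

theorem sum_sq_apply_right_eq_one_of_mem_unitaryGroup {W : Matrix ι ι ℝ}
    (hW : W ∈ unitaryGroup ι ℝ) (i : ι) : ∑ j, W i j ^ 2 = 1 := by
  simpa [mul_apply, sq] using congrFun₂ (mem_unitaryGroup_iff.mp hW) i i

theorem sum_sq_apply_left_eq_one_of_mem_unitaryGroup {W : Matrix ι ι ℝ}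
    (hW : W ∈ unitaryGroup ι ℝ) (j : ι) : ∑ i, W i j ^ 2 = 1 :=
  sum_sq_apply_right_eq_one_of_mem_unitaryGroup (Unitary.star_mem hW) j

theorem trace_conj_diagonal_mul_conj_diagonal (U V : Matrix ι ι ℝ) (d x : ι → ℝ) :
    (V * diagonal d * star V * (U * diagonal x * star U)).trace =
      ∑ i, ∑ j, d i * x j * (star V * U) i j ^ 2 := by
  have hcycle : (V * diagonal d * star V * (U * diagonal x * star U)).trace =
      (diagonal d * (star V * U) * diagonal x * star (star V * U)).trace := by
    rw [star_mul, star_star, Matrix.mul_assoc, Matrix.mul_assoc, trace_mul_comm]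
    simp only [Matrix.mul_assoc]
  rw [hcycle]
  simp only [trace, diag_apply, mul_apply, star_apply, star_trivial, diagonal_apply, ite_mul,
    mul_ite, zero_mul, mul_zero, Finset.sum_ite_eq, Finset.sum_ite_eq', Finset.mem_univ, if_true]
  refine Finset.sum_congr rfl fun i _ => Finset.sum_congr rfl fun j _ => ?_
  ring

namespace IsHermitian

variable {A B : Matrix ι ι ℝ}

theorem trace_cfc (hA : A.IsHermitian) (f : ℝ → ℝ) :
    (hA.cfc f).trace = ∑ i, f (hA.eigenvalues i) := by
  rw [IsHermitian.cfc, Unitary.conjStarAlgAut_apply, trace_mul_cycle, Unitary.coe_star_mul_self,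
    Matrix.one_mul, trace_diagonal]
  rfl

theorem exp_eq_cfc (hA : A.IsHermitian) : NormedSpace.exp A = hA.cfc Real.exp := by
  have hU := mem_unitaryGroup_iff.mp hA.eigenvectorUnitary.2
  conv_lhs => rw [hA.spectral_theorem, Unitary.conjStarAlgAut_apply]
  rw [← inv_eq_right_inv hU, exp_conj _ _ Unitary.isUnit_coe, exp_diagonal, inv_eq_right_inv hU,
    IsHermitian.cfc, Unitary.conjStarAlgAut_apply, Real.exp_eq_exp_ℝ, Pi.exp_def]
  rfl

theorem trace_mul_eq_sum_eigenvalues_mul (hA : A.IsHermitian) (hB : B.IsHermitian) :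
    (A * B).trace = ∑ i, ∑ j, hA.eigenvalues i * hB.eigenvalues j *
      (star (hA.eigenvectorUnitary : Matrix ι ι ℝ) * hB.eigenvectorUnitary) i j ^ 2 := by
  conv_lhs => rw [hA.spectral_theorem, hB.spectral_theorem]
  exact trace_conj_diagonal_mul_conj_diagonal _ _ _ _

end IsHermitian

theorem IsHermitian.trace_mul_matLog {n : ℕ} {X : Matrix (Fin n) (Fin n) ℝ} (hX : X.IsHermitian) :
    (X * matLog X).trace = ∑ j, hX.eigenvalues j * Real.log (hX.eigenvalues j) := by
  have hmul : X * matLog X = cfc (fun t => t * Real.log t) X := by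
    have hlog : ContinuousOn Real.log (spectrum ℝ X) := (hX.spectrum_real_eq_range_eigenvalues ▸
      Set.finite_range _).continuousOn _
    rw [matLog, dif_pos hX, ← hX.cfc_eq, cfc_mul (fun t => t) Real.log X, cfc_id' ℝ X]
  rw [hmul, hX.cfc_eq, hX.trace_cfc]

theorem IsHermitian.trace_mul_le_trace_mul_matLog_sub_add_trace_exp {n : ℕ}
    {H X : Matrix (Fin n) (Fin n) ℝ} (hH : H.IsHermitian) (hX : X.PosDef) :
    (H * X).trace ≤ (X * matLog X).trace - X.trace + (NormedSpace.exp H).trace := by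
  set d := hH.eigenvalues
  set x := hX.isHermitian.eigenvalues
  set W := star (hH.eigenvectorUnitary : Matrix (Fin n) (Fin n) ℝ) *
    hX.isHermitian.eigenvectorUnitary
  have hW : W ∈ unitaryGroup (Fin n) ℝ := mul_mem (Unitary.star_mem hH.eigenvectorUnitary.2)
    hX.isHermitian.eigenvectorUnitary.2
  rw [hH.trace_mul_eq_sum_eigenvalues_mul hX.isHermitian, hX.isHermitian.trace_mul_matLog,
    hX.isHermitian.trace_eq_sum_eigenvalues, hH.exp_eq_cfc, hH.trace_cfc]
  -- `W` is orthogonal, so `(W i j ^ 2)` is doubly stochastic: weigh the scalar inequality by it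
  calc ∑ i, ∑ j, d i * x j * W i j ^ 2
      ≤ ∑ i, ∑ j, (x j * Real.log (x j) - x j + Real.exp (d i)) * W i j ^ 2 := by
        gcongr with i _ j _
        exact Real.mul_le_mul_log_sub_add_exp (d i) (hX.eigenvalues_pos j)
    _ = ∑ j, (x j * Real.log (x j) - x j) * ∑ i, W i j ^ 2 +
          ∑ i, Real.exp (d i) * ∑ j, W i j ^ 2 := by
        simp only [add_mul, Finset.sum_add_distrib, Finset.mul_sum]
        rw [Finset.sum_comm]
    _ = _ := by
        simp only [sum_sq_apply_left_eq_one_of_mem_unitaryGroup hW,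
          sum_sq_apply_right_eq_one_of_mem_unitaryGroup hW, mul_one, Finset.sum_sub_distrib]
        rfl

end Matrix

/-- Weak duality for the entropically regularized SDP: for any `λ ∈ ℝ^m` and any symmetric
positive definite `X` with `Tr[AᵢX] = bᵢ` for all `i`,
`b·λ − β⁻¹ Tr[exp(−β(C − λ·A))] ≤ Tr[CX] + β⁻¹ Tr[X log X − X]`. -/
theorem entropic_weak_duality {n m : ℕ} (C : Matrix (Fin n) (Fin n) ℝ) (hC : C.IsHermitian)
    (A : Fin m → Matrix (Fin n) (Fin n) ℝ) (hA : ∀ i, (A i).IsHermitian)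
    (b : Fin m → ℝ) (β : ℝ) (hβ : 0 < β) :
    ∀ (l : Fin m → ℝ) (X : Matrix (Fin n) (Fin n) ℝ), X.PosDef →
      (∀ i, (A i * X).trace = b i) →
      b ⬝ᵥ l - β⁻¹ * (NormedSpace.exp ((-β) • (C - ∑ i, l i • A i))).trace ≤
        (C * X).trace + β⁻¹ * (X * matLog X - X).trace := by
  intro l X hX hb
  set L := ∑ i, l i • A i
  have hL : L.IsHermitian := isSelfAdjoint_sum _ fun i _ => (hA i).smul (IsSelfAdjoint.all (l i))
  have hH : ((-β) • (C - L)).IsHermitian := (hC.sub hL).smul (IsSelfAdjoint.all _)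
  have hbl : b ⬝ᵥ l = (L * X).trace := by
    simp only [L, Matrix.sum_mul, Matrix.smul_mul, trace_sum, trace_smul, smul_eq_mul, hb,
      dotProduct, mul_comm]
  have key := hH.trace_mul_le_trace_mul_matLog_sub_add_trace_exp hX
  rw [Matrix.smul_mul, trace_smul, Matrix.sub_mul, trace_sub, smul_eq_mul] at key
  rw [trace_sub, hbl]
  have hscaled := mul_le_mul_of_nonneg_left key (inv_nonneg.mpr hβ.le)
  rw [← mul_assoc, mul_neg, inv_mul_cancel₀ hβ.ne'] at hscaled
  linarith
end
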